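/- Every connected interval graph contains a dominating path, i.e., a path P such that every vertex of the graph is either on P or adjacent to a vertex of P. -/

import Mathlib

/-!
Let `a` be a vertex whose interval starts leftmost and `b` one whose interval ends rightmost.
Consecutive intervals along any `a`–`b` path overlap, so together they cover `[l a, r b]`,
which contains every left endpoint `l x`. The vertex of the path whose interval contains `l x`
is then `x` itself or a neighbour of `x`, so any path from `a` to `b` is dominating.
-/

namespace SimpleGraph

variable {V : Type*} {G : SimpleGraph V} {l r : V → ℝ}

theorem Walk.exists_mem_support_mem_Icc (hadj : ∀ v w, G.Adj v w → l w ≤ r v) {a b : V}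
    (p : G.Walk a b) {t : ℝ} (ht : t ∈ Set.Icc (l a) (r b)) :
    ∃ y ∈ p.support, t ∈ Set.Icc (l y) (r y) := by
  induction p with
  | nil => exact ⟨_, List.mem_singleton_self _, ht⟩
  | @cons a c b hac q ih =>
    by_cases hta : t ≤ r a
    · exact ⟨a, (cons hac q).start_mem_support, ht.1, hta⟩
    · obtain ⟨y, hy, hty⟩ := ih ⟨(hadj a c hac).trans (not_le.mp hta).le, ht.2⟩
      exact ⟨y, List.mem_cons_of_mem _ hy, hty⟩

theorem eq_or_adj_of_left_mem_Icc (hlr : ∀ v, l v ≤ r v)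
    (hadj : ∀ v w, v ≠ w → l w ≤ r v → l v ≤ r w → G.Adj v w) {x y : V}
    (h : l x ∈ Set.Icc (l y) (r y)) : x = y ∨ G.Adj x y :=
  or_iff_not_imp_left.2 fun hxy => hadj x y hxy (h.1.trans (hlr x)) h.2

end SimpleGraph

/-- Every connected interval graph contains a dominating path. -/
theorem interval_graph_dominating_path {V : Type*} [Fintype V] (G : SimpleGraph V)
    (l r : V → ℝ) (hlr : ∀ v, l v ≤ r v)
    (hadj : ∀ v w, G.Adj v w ↔ v ≠ w ∧ l w ≤ r v ∧ l v ≤ r w)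
    (hconn : G.Connected) :
    ∃ (u v : V) (p : G.Walk u v), p.IsPath ∧
      ∀ x : V, x ∈ p.support ∨ ∃ y ∈ p.support, G.Adj x y := by
  classical
  have : Nonempty V := hconn.nonempty
  obtain ⟨a, ha⟩ := Finite.exists_min l
  obtain ⟨b, hb⟩ := Finite.exists_max r
  obtain ⟨p⟩ := hconn a b
  refine ⟨a, b, p.toPath, p.toPath.2, fun x => ?_⟩
  obtain ⟨y, hy, hxy⟩ := (p.toPath : G.Walk a b).exists_mem_support_mem_Icc
    (fun v w h => ((hadj v w).1 h).2.1) ⟨ha x, (hlr x).trans (hb x)⟩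
  rcases SimpleGraph.eq_or_adj_of_left_mem_Icc hlr
    (fun v w hne h₁ h₂ => (hadj v w).2 ⟨hne, h₁, h₂⟩) hxy with rfl | hadj_xy
  · exact Or.inl hy
  · exact Or.inr ⟨y, hy, hadj_xy⟩
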